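/- Completeness of the Hilbert calculus H_S4 with respect to the restricted Nmatrix R(M'_S4): for every set Γ of modal formulas and every modal formula φ, if for every level valuation v ∈ L'_S4 one has v(φ) ∈ D = {1,2} whenever v(γ) ∈ D for every γ ∈ Γ, then Γ ⊢_S4 φ. -/
import Mathlib


/-- Modal formulas over signature Σ = {¬, □, →, ∨, ∧}. -/
inductive MF
  | var : ℕ → MF
  | neg : MF → MF
  | box : MF → MF
  | imp : MF → MF → MF
  | dis : MF → MF → MF
  | con : MF → MF → MF
deriving DecidableEq

/-- The three truth values 0, 1, 2. -/
inductive V3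
  | z | o | t
deriving DecidableEq

/-- Designated values D = {1, 2}. -/
def Des : Set V3 := {V3.o, V3.t}

def negOp : V3 → Set V3
  | .z => {.o, .t}
  | .o => {.z}
  | .t => {.z}

def boxOp : V3 → Set V3
  | .z => {.z}
  | .o => {.z}
  | .t => {.t}

def impOp : V3 → V3 → Set V3
  | .z, .z => {.o, .t}
  | .z, .o => {.o, .t}
  | .z, .t => {.t}
  | .o, .z => {.z}
  | .o, .o => {.o, .t}
  | .o, .t => {.t}
  | .t, .z => {.z}
  | .t, .o => {.o}
  | .t, .t => {.t}

def disOp : V3 → V3 → Set V3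
  | .z, .z => {.z}
  | .z, .o => {.o, .t}
  | .o, .z => {.o, .t}
  | .o, .o => {.o, .t}
  | _, _ => {.t}

def conOp : V3 → V3 → Set V3
  | .z, _ => {.z}
  | _, .z => {.z}
  | .t, .t => {.t}
  | _, _ => {.o}

/-- Valuations over the reduced Nmatrix M'_S4. -/
def IsVal (v : MF → V3) : Prop :=
  (∀ α, v (.neg α) ∈ negOp (v α)) ∧
  (∀ α, v (.box α) ∈ boxOp (v α)) ∧
  (∀ α β, v (.imp α β) ∈ impOp (v α) (v β)) ∧
  (∀ α β, v (.dis α β) ∈ disOp (v α) (v β)) ∧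
  (∀ α β, v (.con α β) ∈ conOp (v α) (v β))

/-- The levels L_k. -/
def LevelS4 : ℕ → Set (MF → V3)
  | 0 => {v | IsVal v}
  | (k+1) => {v ∈ LevelS4 k | ∀ α, (∀ w ∈ LevelS4 k, w α ∈ Des) → v α = V3.t}

/-- Level valuations L'_S4 = ⋂_{k ≥ 0} L_k. -/
def LVS4 : Set (MF → V3) := ⋂ k, LevelS4 k

/-- Theorems of the Hilbert calculus H_S4 : classical propositional axioms over
{¬,→,∨,∧}, plus K, T, 4, with modus ponens and necessitation. -/
inductive S4Thm : MF → Prop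
  | ax1 (α β : MF) : S4Thm (α.imp (β.imp α))
  | ax2 (α β γ : MF) : S4Thm ((α.imp (β.imp γ)).imp ((α.imp β).imp (α.imp γ)))
  | ax3 (α β : MF) : S4Thm (α.imp (β.imp (α.con β)))
  | ax4 (α β : MF) : S4Thm ((α.con β).imp α)
  | ax5 (α β : MF) : S4Thm ((α.con β).imp β)
  | ax6 (α β : MF) : S4Thm (α.imp (α.dis β))
  | ax7 (α β : MF) : S4Thm (β.imp (α.dis β))
  | ax8 (α β γ : MF) : S4Thm ((α.imp γ).imp ((β.imp γ).imp ((α.dis β).imp γ)))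
  | ax9 (α β : MF) : S4Thm ((β.imp α).imp ((β.imp α.neg).imp β.neg))
  | ax10 (α β : MF) : S4Thm (α.imp (α.neg.imp β))
  | dne (α : MF) : S4Thm (α.neg.neg.imp α)
  | axK (α β : MF) : S4Thm ((α.imp β).box.imp (α.box.imp β.box))
  | axT (α : MF) : S4Thm (α.box.imp α)
  | axFour (α : MF) : S4Thm (α.box.imp α.box.box)
  | mp {α β : MF} : S4Thm (α.imp β) → S4Thm α → S4Thm β
  | nec {α : MF} : S4Thm α → S4Thm α.box

/-- Γ ⊢_S4 φ : either φ is a theorem, or some β₁,…,βₙ ∈ Γ (n ≥ 1) give a theorem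
β₁ → (β₂ → (… → (βₙ → φ)…)). -/
def S4Deriv (Γ : Set MF) (φ : MF) : Prop :=
  S4Thm φ ∨ ∃ l : List MF, l ≠ [] ∧ (∀ β ∈ l, β ∈ Γ) ∧ S4Thm (l.foldr MF.imp φ)

/-- Δ is φ-saturated (w.r.t. ⊢_S4). -/
def SatS4 (Δ : Set MF) (φ : MF) : Prop :=
  ¬ S4Deriv Δ φ ∧ ∀ α ∉ Δ, S4Deriv (insert α Δ) φ

open Classical in
/-- The canonical function v_Δ. -/
noncomputable def vDeltaS4 (Δ : Set MF) : MF → V3 :=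
  fun α => if MF.box α ∈ Δ then V3.t else if α ∈ Δ then V3.o else V3.z

/-- Λ is closed under (immediate, hence all) subformulas. -/
def SubClosed (Λ : Set MF) : Prop :=
  (∀ α, MF.neg α ∈ Λ → α ∈ Λ) ∧
  (∀ α, MF.box α ∈ Λ → α ∈ Λ) ∧
  (∀ α β, MF.imp α β ∈ Λ → α ∈ Λ ∧ β ∈ Λ) ∧
  (∀ α β, MF.dis α β ∈ Λ → α ∈ Λ ∧ β ∈ Λ) ∧
  (∀ α β, MF.con α β ∈ Λ → α ∈ Λ ∧ β ∈ Λ)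

/-- Partial valuations with domain Λ (modelled as total functions constrained on Λ). -/
def IsPVal (Λ : Set MF) (v : MF → V3) : Prop :=
  (∀ α, MF.neg α ∈ Λ → v (.neg α) ∈ negOp (v α)) ∧
  (∀ α, MF.box α ∈ Λ → v (.box α) ∈ boxOp (v α)) ∧
  (∀ α β, MF.imp α β ∈ Λ → v (.imp α β) ∈ impOp (v α) (v β)) ∧
  (∀ α β, MF.dis α β ∈ Λ → v (.dis α β) ∈ disOp (v α) (v β)) ∧
  (∀ α β, MF.con α β ∈ Λ → v (.con α β) ∈ conOp (v α) (v β))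

/-- PLV'(Λ): partial' level valuations over Λ (witnesses amongst level valuations). -/
def PLV' (Λ : Set MF) : Set (MF → V3) :=
  {v | IsPVal Λ v ∧ ∀ α ∈ Λ, v α = V3.o →
    ∃ w ∈ LVS4, w α = V3.z ∧ ∀ β ∈ Λ, v β = V3.t → w β = V3.t}

/-- PLV(Λ): partial level valuations over Λ, defined as the largest subset of
PV(Λ) whose condition is witnessed inside itself. -/
def PLV (Λ : Set MF) : Set (MF → V3) :=
  ⋃₀ {S | (∀ v ∈ S, IsPVal Λ v) ∧
      ∀ v ∈ S, ∀ α ∈ Λ, v α = V3.o →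
        ∃ w ∈ S, w α = V3.z ∧ ∀ β ∈ Λ, v β = V3.t → w β = V3.t}

/-- Set of subformulas of a modal formula. -/
def MF.subf : MF → Finset MF
  | .var n => {.var n}
  | .neg α => insert (.neg α) α.subf
  | .box α => insert (.box α) α.subf
  | .imp α β => insert (.imp α β) (α.subf ∪ β.subf)
  | .dis α β => insert (.dis α β) (α.subf ∪ β.subf)
  | .con α β => insert (.con α β) (α.subf ∪ β.subf)

namespace S4C

/-! ### Derivability with hypotheses -/

inductive Prov (Γ : Set MF) : MF → Prop
  | thm {α} : S4Thm α → Prov Γ α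
  | hyp {α} : α ∈ Γ → Prov Γ α
  | mp {α β} : Prov Γ (α.imp β) → Prov Γ α → Prov Γ β

theorem imp_refl (α : MF) : S4Thm (α.imp α) :=
  (S4Thm.mp (S4Thm.mp (S4Thm.ax2 α (α.imp α) α) (S4Thm.ax1 _ _)) (S4Thm.ax1 _ _))

theorem Prov.mono {Γ Δ : Set MF} (h : Γ ⊆ Δ) {α} : Prov Γ α → Prov Δ α := by
  intro hp
  induction hp with
  | thm h' => exact .thm h'
  | hyp h' => exact .hyp (h h')
  | mp _ _ ih1 ih2 => exact .mp ih1 ih2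

theorem deduction {Γ : Set MF} {α β} (h : Prov (insert α Γ) β) : Prov Γ (α.imp β) := by
  induction h with
  | thm h' => exact .mp (.thm (S4Thm.ax1 _ _)) (.thm h')
  | @hyp β h' =>
    rcases Set.mem_insert_iff.1 h' with rfl | h'
    · exact .thm (imp_refl _)
    · exact .mp (.thm (S4Thm.ax1 _ _)) (.hyp h')
  | mp _ _ ih1 ih2 => exact .mp (.mp (.thm (S4Thm.ax2 _ _ _)) ih1) ih2

theorem prov_empty {α} (h : Prov (∅ : Set MF) α) : S4Thm α := by
  induction h with
  | thm h' => exact h'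
  | hyp h' => exact absurd h' (Set.notMem_empty _)
  | mp _ _ ih1 ih2 => exact ih1.mp ih2

theorem syl {a b c : MF} (h1 : S4Thm (a.imp b)) (h2 : S4Thm (b.imp c)) : S4Thm (a.imp c) :=
  (S4Thm.mp (S4Thm.mp (S4Thm.ax2 a b c) (S4Thm.mp (S4Thm.ax1 _ _) h2)) h1)

/-! ### Classical propositional theorems -/

theorem em (α : MF) : S4Thm (α.dis α.neg) := by
  set γ := α.dis α.neg with hγ
  have h1 : Prov (∅ : Set MF) (γ.neg.imp α.neg) := by
    apply deduction
    exact .mp (.mp (.thm (S4Thm.ax9 γ α)) (.thm (S4Thm.ax6 _ _)))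
      (.mp (.thm (S4Thm.ax1 _ _)) (.hyp (Set.mem_insert _ _)))
  have h2 : Prov (∅ : Set MF) (γ.neg.imp α.neg.neg) := by
    apply deduction
    exact .mp (.mp (.thm (S4Thm.ax9 γ α.neg)) (.thm (S4Thm.ax7 _ _)))
      (.mp (.thm (S4Thm.ax1 _ _)) (.hyp (Set.mem_insert _ _)))
  have h3 : Prov (∅ : Set MF) γ.neg.neg :=
    .mp (.mp (.thm (S4Thm.ax9 α.neg γ.neg)) h1) h2
  exact (S4Thm.dne _).mp (prov_empty h3)

theorem em_elim (α ψ : MF) : S4Thm ((α.imp ψ).imp ((α.neg.imp ψ).imp ψ)) := by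
  have h : Prov (∅ : Set MF) ((α.imp ψ).imp ((α.neg.imp ψ).imp ψ)) := by
    apply deduction; apply deduction
    exact .mp (.mp (.mp (.thm (S4Thm.ax8 α α.neg ψ))
      (.hyp (Set.mem_insert_of_mem _ (Set.mem_insert _ _))))
      (.hyp (Set.mem_insert _ _))) (.thm (em α))
  exact prov_empty h

theorem neg_imp (α β : MF) : S4Thm (α.neg.imp (α.imp β)) := by
  have h : Prov (∅ : Set MF) (α.neg.imp (α.imp β)) := by
    apply deduction; apply deduction
    exact .mp (.mp (.thm (S4Thm.ax10 α β)) (.hyp (Set.mem_insert _ _)))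
      (.hyp (Set.mem_insert_of_mem _ (Set.mem_insert _ _)))
  exact prov_empty h

/-! ### Modal derived theorems -/

theorem box_mono {α β : MF} (h : S4Thm (α.imp β)) : S4Thm (α.box.imp β.box) :=
  (S4Thm.axK α β).mp h.nec

theorem box_conIntro (α β : MF) : S4Thm (α.box.imp (β.box.imp (α.con β).box)) :=
  syl (box_mono (S4Thm.ax3 α β)) (S4Thm.axK β (α.con β))

/-! ### Lists of hypotheses, S4Deriv ↔ Prov -/

theorem gen_ded {θ : MF} (l : List MF) : ∀ {Γ : Set MF},
    Prov (Γ ∪ {x | x ∈ l}) θ → Prov Γ (l.foldr MF.imp θ) := by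
  induction l with
  | nil => intro Γ h; exact h.mono (by simp)
  | cons a t ih =>
    intro Γ h
    apply deduction
    apply ih
    apply h.mono
    intro x hx
    simp only [Set.mem_union, Set.mem_setOf_eq, List.mem_cons, Set.mem_insert_iff] at hx ⊢
    tauto

theorem peel {Γ : Set MF} (l : List MF) {θ : MF} (h : Prov Γ (l.foldr MF.imp θ))
    (hs : ∀ b ∈ l, b ∈ Γ) : Prov Γ θ := by
  induction l with
  | nil => exact h
  | cons a t ih =>
    exact ih (h.mp (.hyp (hs a (by simp)))) (fun b hb => hs b (by simp [hb]))

theorem prov_compact {Γ : Set MF} {φ : MF} (h : Prov Γ φ) :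
    ∃ l : List MF, (∀ b ∈ l, b ∈ Γ) ∧ S4Thm (l.foldr MF.imp φ) := by
  induction h with
  | thm h' => exact ⟨[], by simp, h'⟩
  | @hyp α h' => exact ⟨[α], by simpa using h', imp_refl α⟩
  | @mp α β _ _ ih1 ih2 =>
    obtain ⟨l1, hl1, ht1⟩ := ih1
    obtain ⟨l2, hl2, ht2⟩ := ih2
    refine ⟨l1 ++ l2, ?_, ?_⟩
    · intro b hb
      rcases List.mem_append.1 hb with hb | hb
      · exact hl1 b hb
      · exact hl2 b hb
    have p1 : Prov ({x | x ∈ l1 ++ l2} : Set MF) (α.imp β) :=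
      peel l1 (.thm ht1) (by intro b hb; simp [hb])
    have p2 : Prov ({x | x ∈ l1 ++ l2} : Set MF) α :=
      peel l2 (.thm ht2) (by intro b hb; simp [hb])
    have := gen_ded (θ := β) (l1 ++ l2) (Γ := (∅ : Set MF))
      ((p1.mp p2).mono (by simp))
    exact prov_empty this

theorem deriv_of_prov {Γ : Set MF} {φ : MF} (h : Prov Γ φ) : S4Deriv Γ φ := by
  obtain ⟨l, hl, ht⟩ := prov_compact h
  cases l with
  | nil => exact Or.inl ht
  | cons a t => exact Or.inr ⟨a :: t, by simp, hl, ht⟩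

theorem prov_of_deriv {Γ : Set MF} {φ : MF} (h : S4Deriv Γ φ) : Prov Γ φ := by
  rcases h with h | ⟨l, _, hl, ht⟩
  · exact .thm h
  · exact peel l (.thm ht) hl

/-! ### Countability of MF -/

def enc : MF → ℕ
  | .var n => Nat.pair 0 n
  | .neg a => Nat.pair 1 (enc a)
  | .box a => Nat.pair 2 (enc a)
  | .imp a b => Nat.pair 3 (Nat.pair (enc a) (enc b))
  | .dis a b => Nat.pair 4 (Nat.pair (enc a) (enc b))
  | .con a b => Nat.pair 5 (Nat.pair (enc a) (enc b))

theorem enc_inj : Function.Injective enc := by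
  intro x
  induction x with
  | var n => intro y h; cases y <;> simp [enc, Nat.pair_eq_pair] at h; rw [h]
  | neg a ih => intro y h; cases y <;> simp [enc, Nat.pair_eq_pair] at h; rw [ih h]
  | box a ih => intro y h; cases y <;> simp [enc, Nat.pair_eq_pair] at h; rw [ih h]
  | imp a b iha ihb =>
    intro y h; cases y <;> simp [enc, Nat.pair_eq_pair] at h; rw [iha h.1, ihb h.2]
  | dis a b iha ihb =>
    intro y h; cases y <;> simp [enc, Nat.pair_eq_pair] at h; rw [iha h.1, ihb h.2]
  | con a b iha ihb =>
    intro y h; cases y <;> simp [enc, Nat.pair_eq_pair] at h; rw [iha h.1, ihb h.2]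

instance : Countable MF := ⟨⟨enc, enc_inj⟩⟩

instance : Nonempty MF := ⟨.var 0⟩

/-! ### Lindenbaum extension -/

open Classical in
noncomputable def extend (Γ : Set MF) (ψ : MF) (e : ℕ → MF) : ℕ → Set MF
  | 0 => Γ
  | (n + 1) =>
    if Prov (insert (e n) (extend Γ ψ e n)) ψ then extend Γ ψ e n
    else insert (e n) (extend Γ ψ e n)

theorem extend_mono_succ (Γ : Set MF) (ψ : MF) (e : ℕ → MF) (n : ℕ) :
    extend Γ ψ e n ⊆ extend Γ ψ e (n + 1) := by
  rw [extend]
  split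
  · exact subset_rfl
  · exact Set.subset_insert _ _

theorem extend_mono (Γ : Set MF) (ψ : MF) (e : ℕ → MF) {m n : ℕ} (h : m ≤ n) :
    extend Γ ψ e m ⊆ extend Γ ψ e n := by
  induction n with
  | zero => rw [Nat.le_zero.1 h]
  | succ n ih =>
    rcases Nat.lt_or_ge m (n + 1) with h' | h'
    · exact (ih (Nat.lt_succ_iff.1 h')).trans (extend_mono_succ Γ ψ e n)
    · rw [Nat.le_antisymm h h']

theorem extend_not_prov {Γ : Set MF} {ψ : MF} (e : ℕ → MF) (h : ¬ Prov Γ ψ) (n : ℕ) :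
    ¬ Prov (extend Γ ψ e n) ψ := by
  induction n with
  | zero => exact h
  | succ n ih =>
    rw [extend]
    split
    · exact ih
    · assumption

def Sat' (Δ : Set MF) : Prop :=
  ∃ ψ, ¬ Prov Δ ψ ∧ ∀ α ∉ Δ, Prov (insert α Δ) ψ

theorem lindenbaum {Γ : Set MF} {ψ : MF} (h : ¬ Prov Γ ψ) :
    ∃ Δ : Set MF, Γ ⊆ Δ ∧ Sat' Δ ∧ ψ ∉ Δ ∧ (∀ {α}, Prov Δ α → α ∈ Δ) := by
  obtain ⟨e, he⟩ := exists_surjective_nat MF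
  set Δ : Set MF := ⋃ n, extend Γ ψ e n with hΔ
  have hsub : Γ ⊆ Δ := Set.subset_iUnion (fun n => extend Γ ψ e n) 0
  have hnp : ¬ Prov Δ ψ := by
    intro hp
    obtain ⟨l, hl, ht⟩ := prov_compact hp
    have : ∃ N, ∀ b ∈ l, b ∈ extend Γ ψ e N := by
      clear ht
      induction l with
      | nil => exact ⟨0, by simp⟩
      | cons a t ih =>
        obtain ⟨N, hN⟩ := ih (fun b hb => hl b (by simp [hb]))
        obtain ⟨M, hM⟩ := Set.mem_iUnion.1 (hl a (by simp))
        refine ⟨max M N, ?_⟩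
        intro b hb
        rcases List.mem_cons.1 hb with rfl | hb
        · exact extend_mono Γ ψ e (le_max_left M N) hM
        · exact extend_mono Γ ψ e (le_max_right M N) (hN b hb)
    obtain ⟨N, hN⟩ := this
    exact extend_not_prov e h N (peel l (.thm ht) hN)
  have hsat : ∀ α ∉ Δ, Prov (insert α Δ) ψ := by
    intro α hα
    obtain ⟨n, rfl⟩ := he α
    by_contra hc
    have h1 : ¬ Prov (insert (e n) (extend Γ ψ e n)) ψ := by
      intro hp
      exact hc (hp.mono (Set.insert_subset_insert (Set.subset_iUnion _ n)))
    have h2 : e n ∈ extend Γ ψ e (n + 1) := by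
      rw [extend]
      split
      · exact absurd ‹_› h1
      · exact Set.mem_insert _ _
    exact hα (Set.mem_iUnion.2 ⟨n + 1, h2⟩)
  have hclosed : ∀ {α}, Prov Δ α → α ∈ Δ := by
    intro α hp
    by_contra hα
    exact hnp ((deduction (hsat α hα)).mp hp)
  exact ⟨Δ, hsub, ⟨ψ, hnp, hsat⟩, fun hψ => hnp (.hyp hψ), hclosed⟩

/-! ### Properties of saturated sets -/

theorem Sat'.closed {Δ : Set MF} (hS : Sat' Δ) {α} (h : Prov Δ α) : α ∈ Δ := by
  obtain ⟨ψ, hnp, hsat⟩ := hS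
  by_contra hα
  exact hnp ((deduction (hsat α hα)).mp h)

theorem Sat'.thm_mem {Δ : Set MF} (hS : Sat' Δ) {α} (h : S4Thm α) : α ∈ Δ :=
  hS.closed (.thm h)

theorem Sat'.mp_mem {Δ : Set MF} (hS : Sat' Δ) {α β} (h1 : α.imp β ∈ Δ) (h2 : α ∈ Δ) :
    β ∈ Δ :=
  hS.closed (.mp (.hyp h1) (.hyp h2))

theorem Sat'.not_both {Δ : Set MF} (hS : Sat' Δ) {α} (h1 : α ∈ Δ) (h2 : α.neg ∈ Δ) : False := by
  obtain ⟨ψ, hnp, _⟩ := hS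
  exact hnp (.mp (.mp (.thm (S4Thm.ax10 α ψ)) (.hyp h1)) (.hyp h2))

theorem Sat'.neg_mem {Δ : Set MF} (hS : Sat' Δ) {α} (h : α ∉ Δ) : α.neg ∈ Δ := by
  by_contra hn
  obtain ⟨ψ, hnp, hsat⟩ := hS
  exact hnp (.mp (.mp (.thm (em_elim α ψ)) (deduction (hsat α h))) (deduction (hsat α.neg hn)))

theorem Sat'.imp_mem {Δ : Set MF} (hS : Sat' Δ) {α β} (h : α ∈ Δ → β ∈ Δ) :
    α.imp β ∈ Δ := by
  by_cases hα : α ∈ Δ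
  · exact hS.mp_mem (hS.thm_mem (S4Thm.ax1 β α)) (h hα)
  · exact hS.mp_mem (hS.thm_mem (neg_imp α β)) (hS.neg_mem hα)

theorem Sat'.boxT {Δ : Set MF} (hS : Sat' Δ) {α} (h : α.box ∈ Δ) : α ∈ Δ :=
  hS.mp_mem (hS.thm_mem (S4Thm.axT α)) h

/-! ### The canonical valuation -/

theorem vD_eq_t {Δ : Set MF} {α : MF} (h1 : α.box ∈ Δ) : vDeltaS4 Δ α = V3.t := by
  simp [vDeltaS4, h1]

theorem vD_eq_o {Δ : Set MF} {α : MF} (h1 : α.box ∉ Δ) (h2 : α ∈ Δ) :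
    vDeltaS4 Δ α = V3.o := by
  simp [vDeltaS4, h1, h2]

theorem vD_eq_z {Δ : Set MF} {α : MF} (h1 : α.box ∉ Δ) (h2 : α ∉ Δ) :
    vDeltaS4 Δ α = V3.z := by
  simp [vDeltaS4, h1, h2]

theorem vD_des_iff {Δ : Set MF} (hS : Sat' Δ) {α : MF} :
    vDeltaS4 Δ α ∈ Des ↔ α ∈ Δ := by
  by_cases h1 : α.box ∈ Δ
  · simp [vD_eq_t h1, Des, hS.boxT h1]
  · by_cases h2 : α ∈ Δ
    · simp [vD_eq_o h1 h2, Des, h2]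
    · simp [vD_eq_z h1 h2, Des, h2]

theorem vD_isval {Δ : Set MF} (hS : Sat' Δ) : IsVal (vDeltaS4 Δ) := by
  have hT : ∀ {α : MF}, α.box ∈ Δ → α ∈ Δ := fun h => hS.boxT h
  refine ⟨?_, ?_, ?_, ?_, ?_⟩
  · -- neg
    intro α
    by_cases hα : α ∈ Δ
    · have hn : α.neg ∉ Δ := fun h => hS.not_both hα h
      have hbn : (MF.neg α).box ∉ Δ := fun h => hn (hT h)
      rw [vD_eq_z hbn hn]
      by_cases hb : α.box ∈ Δ
      · rw [vD_eq_t hb]; simp [negOp]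
      · rw [vD_eq_o hb hα]; simp [negOp]
    · have hb : α.box ∉ Δ := fun h => hα (hT h)
      rw [vD_eq_z hb hα]
      have hn : α.neg ∈ Δ := hS.neg_mem hα
      by_cases hbn : (MF.neg α).box ∈ Δ
      · rw [vD_eq_t hbn]; simp [negOp]
      · rw [vD_eq_o hbn hn]; simp [negOp]
  · -- box
    intro α
    by_cases hb : α.box ∈ Δ
    · have hbb : α.box.box ∈ Δ := hS.mp_mem (hS.thm_mem (S4Thm.axFour α)) hb
      rw [vD_eq_t hb, vD_eq_t hbb]; simp [boxOp]
    · have hbb : α.box.box ∉ Δ := fun h => hb (hT h)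
      rw [vD_eq_z hbb hb]
      by_cases hα : α ∈ Δ
      · rw [vD_eq_o hb hα]; simp [boxOp]
      · rw [vD_eq_z hb hα]; simp [boxOp]
  · -- imp
    intro α β
    by_cases hbβ : β.box ∈ Δ
    · have hbi : (α.imp β).box ∈ Δ :=
        hS.mp_mem (hS.thm_mem (box_mono (S4Thm.ax1 β α))) hbβ
      rw [vD_eq_t hbβ, vD_eq_t hbi]
      rcases hx : vDeltaS4 Δ α with _ | _ | _ <;> simp [impOp]
    · by_cases hβ : β ∈ Δ
      · -- v β = o
        rw [vD_eq_o hbβ hβ]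
        have hi : α.imp β ∈ Δ := hS.imp_mem (fun _ => hβ)
        by_cases hbα : α.box ∈ Δ
        · -- v α = t, result must be o
          have hbi : (α.imp β).box ∉ Δ := fun h =>
            hbβ (hS.mp_mem (hS.mp_mem (hS.thm_mem (S4Thm.axK α β)) h) hbα)
          rw [vD_eq_t hbα, vD_eq_o hbi hi]; simp [impOp]
        · -- v α ∈ {z, o}, result set is {o,t}, value is designated
          have hdes : vDeltaS4 Δ (α.imp β) ∈ Des := (vD_des_iff hS).2 hi
          by_cases hα : α ∈ Δ
          · rw [vD_eq_o hbα hα]; simpa [impOp, Des] using hdes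
          · rw [vD_eq_z hbα hα]; simpa [impOp, Des] using hdes
      · -- v β = z
        rw [vD_eq_z hbβ hβ]
        by_cases hα : α ∈ Δ
        · -- result must be z
          have hi : α.imp β ∉ Δ := fun h => hβ (hS.mp_mem h hα)
          have hbi : (α.imp β).box ∉ Δ := fun h => hi (hT h)
          rw [vD_eq_z hbi hi]
          by_cases hbα : α.box ∈ Δ
          · rw [vD_eq_t hbα]; simp [impOp]
          · rw [vD_eq_o hbα hα]; simp [impOp]
        · have hbα : α.box ∉ Δ := fun h => hα (hT h)
          rw [vD_eq_z hbα hα]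
          have hi : α.imp β ∈ Δ := hS.imp_mem (fun h => absurd h hα)
          have hdes : vDeltaS4 Δ (α.imp β) ∈ Des := (vD_des_iff hS).2 hi
          simpa [impOp, Des] using hdes
  · -- dis
    intro α β
    by_cases hbα : α.box ∈ Δ
    · have hbd : (α.dis β).box ∈ Δ :=
        hS.mp_mem (hS.thm_mem (box_mono (S4Thm.ax6 α β))) hbα
      rw [vD_eq_t hbα, vD_eq_t hbd]
      rcases hx : vDeltaS4 Δ β with _ | _ | _ <;> simp [disOp]
    · by_cases hbβ : β.box ∈ Δ
      · have hbd : (α.dis β).box ∈ Δ :=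
          hS.mp_mem (hS.thm_mem (box_mono (S4Thm.ax7 α β))) hbβ
        rw [vD_eq_t hbβ, vD_eq_t hbd]
        by_cases hα : α ∈ Δ
        · rw [vD_eq_o hbα hα]; simp [disOp]
        · rw [vD_eq_z hbα hα]; simp [disOp]
      · by_cases hα : α ∈ Δ
        · have hd : α.dis β ∈ Δ := hS.mp_mem (hS.thm_mem (S4Thm.ax6 α β)) hα
          have hdes : vDeltaS4 Δ (α.dis β) ∈ Des := (vD_des_iff hS).2 hd
          rw [vD_eq_o hbα hα]
          by_cases hβ : β ∈ Δ
          · rw [vD_eq_o hbβ hβ]; simpa [disOp, Des] using hdes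
          · rw [vD_eq_z hbβ hβ]; simpa [disOp, Des] using hdes
        · rw [vD_eq_z hbα hα]
          by_cases hβ : β ∈ Δ
          · have hd : α.dis β ∈ Δ := hS.mp_mem (hS.thm_mem (S4Thm.ax7 α β)) hβ
            have hdes : vDeltaS4 Δ (α.dis β) ∈ Des := (vD_des_iff hS).2 hd
            rw [vD_eq_o hbβ hβ]; simpa [disOp, Des] using hdes
          · rw [vD_eq_z hbβ hβ]
            have hd : α.dis β ∉ Δ := by
              intro h
              obtain ⟨ψ, hnp, hsat⟩ := hS
              exact hnp (.mp (.mp (.mp (.thm (S4Thm.ax8 α β ψ))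
                (deduction (hsat α hα))) (deduction (hsat β hβ))) (.hyp h))
            have hbd : (α.dis β).box ∉ Δ := fun h => hd (hT h)
            rw [vD_eq_z hbd hd]; simp [disOp]
  · -- con
    intro α β
    by_cases hα : α ∈ Δ
    · by_cases hβ : β ∈ Δ
      · have hc : α.con β ∈ Δ :=
          hS.mp_mem (hS.mp_mem (hS.thm_mem (S4Thm.ax3 α β)) hα) hβ
        by_cases hbα : α.box ∈ Δ
        · by_cases hbβ : β.box ∈ Δ
          · have hbc : (α.con β).box ∈ Δ :=
              hS.mp_mem (hS.mp_mem (hS.thm_mem (box_conIntro α β)) hbα) hbβ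
            rw [vD_eq_t hbα, vD_eq_t hbβ, vD_eq_t hbc]; simp [conOp]
          · have hbc : (α.con β).box ∉ Δ := fun h =>
              hbβ (hS.mp_mem (hS.thm_mem (box_mono (S4Thm.ax5 α β))) h)
            rw [vD_eq_t hbα, vD_eq_o hbβ hβ, vD_eq_o hbc hc]; simp [conOp]
        · have hbc : (α.con β).box ∉ Δ := fun h =>
            hbα (hS.mp_mem (hS.thm_mem (box_mono (S4Thm.ax4 α β))) h)
          rw [vD_eq_o hbα hα, vD_eq_o hbc hc]
          by_cases hbβ : β.box ∈ Δ
          · rw [vD_eq_t hbβ]; simp [conOp]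
          · rw [vD_eq_o hbβ hβ]; simp [conOp]
      · have hbβ : β.box ∉ Δ := fun h => hβ (hT h)
        have hc : α.con β ∉ Δ := fun h =>
          hβ (hS.mp_mem (hS.thm_mem (S4Thm.ax5 α β)) h)
        have hbc : (α.con β).box ∉ Δ := fun h => hc (hT h)
        rw [vD_eq_z hbβ hβ, vD_eq_z hbc hc]
        by_cases hbα : α.box ∈ Δ
        · rw [vD_eq_t hbα]; simp [conOp]
        · rw [vD_eq_o hbα hα]; simp [conOp]
    · have hbα : α.box ∉ Δ := fun h => hα (hT h)
      have hc : α.con β ∉ Δ := fun h =>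
        hα (hS.mp_mem (hS.thm_mem (S4Thm.ax4 α β)) h)
      have hbc : (α.con β).box ∉ Δ := fun h => hc (hT h)
      rw [vD_eq_z hbα hα, vD_eq_z hbc hc]
      rcases hx : vDeltaS4 Δ β with _ | _ | _ <;> simp [conOp]

/-! ### Canonical valuations are level valuations -/

theorem vD_level (k : ℕ) : ∀ Δ : Set MF, Sat' Δ → vDeltaS4 Δ ∈ LevelS4 k := by
  induction k with
  | zero =>
    intro Δ hS
    exact vD_isval hS
  | succ k ih =>
    intro Δ hS
    refine ⟨ih Δ hS, ?_⟩
    intro α hα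
    have hthm : S4Thm α := by
      by_contra hna
      have hnp : ¬ Prov (∅ : Set MF) α := fun hp => hna (prov_empty hp)
      obtain ⟨Δ', _, hS', hn, _⟩ := lindenbaum hnp
      have hd := hα _ (ih Δ' hS')
      rw [vD_des_iff hS'] at hd
      exact hn hd
    exact vD_eq_t (hS.thm_mem hthm.nec)

end S4C

/-- Completeness of H_S4 w.r.t. R(M'_S4). -/
theorem s4_completeness (Γ : Set MF) (φ : MF)
    (h : ∀ v ∈ LVS4, (∀ γ ∈ Γ, v γ ∈ Des) → v φ ∈ Des) :
    S4Deriv Γ φ := by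
  by_contra hnd
  have hnp : ¬ S4C.Prov Γ φ := fun hp => hnd (S4C.deriv_of_prov hp)
  obtain ⟨Δ, hsub, hS, hφ, _⟩ := S4C.lindenbaum hnp
  have hv : vDeltaS4 Δ ∈ LVS4 := by
    simp only [LVS4, Set.mem_iInter]
    intro k
    exact S4C.vD_level k Δ hS
  have hd := h _ hv (fun γ hγ => (S4C.vD_des_iff hS).2 (hsub hγ))
  rw [S4C.vD_des_iff hS] at hd
  exact hφ hd
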